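/- Let D be a Krull-Schmidt triangulated category and U a contravariantly finite thick subcategory of D. Then (U, U^⊥) is a stable t-structure in D, where U^⊥ = {T ∈ D | Hom_D(U, T) = 0 for all U ∈ U}. -/

import Mathlib

open CategoryTheory Limits Pretriangulated

universe v u

namespace PaperIKM

variable (C : Type u) [Category.{v} C] [HasZeroObject C] [HasShift C ℤ] [Preadditive C]
  [∀ n : ℤ, (shiftFunctor C n).Additive] [Pretriangulated C]

/-- A stable t-structure in a pretriangulated category. -/
structure IsStableTStructure (U V : Set C) : Prop where
  shift_memU : ∀ (n : ℤ) (X : C), X ∈ U → (shiftFunctor C n).obj X ∈ U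
  shift_memV : ∀ (n : ℤ) (X : C), X ∈ V → (shiftFunctor C n).obj X ∈ V
  hom_zero : ∀ ⦃X Y : C⦄, X ∈ U → Y ∈ V → ∀ f : X ⟶ Y, f = 0
  exists_triangle : ∀ X : C, ∃ (A B : C) (_ : A ∈ U) (_ : B ∈ V)
    (f : A ⟶ X) (g : X ⟶ B) (h : B ⟶ A⟦(1 : ℤ)⟧),
      Triangle.mk f g h ∈ distTriang C

/-- A full triangulated subcategory (as a set of objects closed under the relevant
operations) which is moreover thick, i.e. closed under direct summands. -/
structure IsThickSub (U : Set C) : Prop where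
  zero_mem : ∀ X : C, IsZero X → X ∈ U
  iso_mem : ∀ ⦃X Y : C⦄, (X ≅ Y) → X ∈ U → Y ∈ U
  shift_mem : ∀ (n : ℤ) (X : C), X ∈ U → (shiftFunctor C n).obj X ∈ U
  ext_mem : ∀ T : Triangle C, (T ∈ distTriang C) → T.obj₁ ∈ U → T.obj₃ ∈ U → T.obj₂ ∈ U
  summand_mem : ∀ (X Y : C) (s : X ⟶ Y) (r : Y ⟶ X), s ≫ r = 𝟙 X → Y ∈ U → X ∈ U

/-- The category is Krull-Schmidt : every object is a finite direct sum of objects with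
local endomorphism rings. -/
def IsKrullSchmidt [HasFiniteBiproducts C] : Prop :=
  ∀ X : C, ∃ (m : ℕ) (Y : Fin m → C),
    (∀ i, IsLocalRing (End (Y i))) ∧ Nonempty (X ≅ ⨁ Y)

variable {C}

/-- `f : A ⟶ X` is a right `U`-approximation of `X`. -/
def IsRightApproximation (U : Set C) {A X : C} (f : A ⟶ X) : Prop :=
  A ∈ U ∧ ∀ B ∈ U, ∀ g : B ⟶ X, ∃ h : B ⟶ A, h ≫ f = g

/-- `U` is a contravariantly finite subcategory. -/
def ContravariantlyFinite (U : Set C) : Prop :=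
  ∀ X : C, ∃ (A : C) (f : A ⟶ X), IsRightApproximation U f

/-- The right perpendicular subcategory `U^⊥`. -/
def rightPerp (U : Set C) : Set C :=
  {T | ∀ X ∈ U, ∀ f : X ⟶ T, f = 0}


/-!
Choose a right `U`-approximation `f : A ⟶ X` that is right minimal: every `φ` with `φ ≫ f = f` is
invertible. It exists by Krull–Schmidt: start from an approximation whose source is a finite sum of
objects with local endomorphism rings; if `φ ≫ f = f` with `φ` not invertible, then `𝟙 - φ` is not
in the radical, so one of its components is invertible, and `f` factors through the sum of the
remaining summands, which is again an approximation with fewer summands.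

Complete `f` to a triangle `A ⟶ X ⟶ B ⟶ A⟦1⟧`; Wakamatsu's argument gives `B ∈ U^⊥`. For
`w : W ⟶ B` with `W ∈ U`, the extension `A ⟶ E ⟶ W` classified by `w ≫ h` has `E ∈ U`, and `f`
extends along `A ⟶ E`. Lifting that extension through `f` gives an endomorphism of `A` fixing `f`,
so `A ⟶ E` is a split mono and `w ≫ h = 0`. Then `w` factors through `f ≫ g = 0`.
-/

end PaperIKM

namespace CategoryTheory

variable {C : Type*} [Category C] [Preadditive C]

lemma isIso_id_sub_comp_of_isIso_id_sub_comp {P Q : C} (c : P ⟶ Q) (d : Q ⟶ P)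
    [IsIso (𝟙 Q - d ≫ c)] : IsIso (𝟙 P - c ≫ d) := by
  have hinv₁ : c ≫ ((𝟙 Q - d ≫ c) ≫ inv (𝟙 Q - d ≫ c)) ≫ d = c ≫ d := by
    rw [IsIso.hom_inv_id, Category.id_comp]
  have hinv₂ : c ≫ (inv (𝟙 Q - d ≫ c) ≫ (𝟙 Q - d ≫ c)) ≫ d = c ≫ d := by
    rw [IsIso.inv_hom_id, Category.id_comp]
  -- the inverse is `1 + c (1 - d c)⁻¹ d`, as for rings
  refine ⟨𝟙 P + c ≫ inv (𝟙 Q - d ≫ c) ≫ d, ?_, ?_⟩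
  · simp only [Preadditive.sub_comp, Preadditive.comp_sub, Preadditive.comp_add,
      Category.id_comp, Category.comp_id, Category.assoc] at hinv₁ ⊢
    rw [← sub_eq_zero] at hinv₁ ⊢
    convert hinv₁ using 1
    abel
  · simp only [Preadditive.sub_comp, Preadditive.comp_sub, Preadditive.add_comp,
      Category.id_comp, Category.comp_id, Category.assoc] at hinv₂ ⊢
    rw [← sub_eq_zero] at hinv₂ ⊢
    convert hinv₂ using 1
    abel

/-- `α` lies in the Jacobson radical of the category. -/
def IsInRadical {Z W : C} (α : Z ⟶ W) : Prop :=
  ∀ g : W ⟶ Z, IsIso (𝟙 Z - α ≫ g)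

namespace IsInRadical

variable {Z W V : C}

lemma comp_right {α : Z ⟶ W} (h : IsInRadical α) (c : W ⟶ V) : IsInRadical (α ≫ c) :=
  fun g => by simpa using h (c ≫ g)

lemma comp_left {α : Z ⟶ W} (h : IsInRadical α) (c : V ⟶ Z) : IsInRadical (c ≫ α) := fun g => by
  have : IsIso (𝟙 Z - (α ≫ g) ≫ c) := by simpa using h (g ≫ c)
  simpa using isIso_id_sub_comp_of_isIso_id_sub_comp c (α ≫ g)

lemma zero : IsInRadical (0 : Z ⟶ W) :=
  fun _ => by simpa using IsIso.id Z

lemma add {α β : Z ⟶ W} (hα : IsInRadical α) (hβ : IsInRadical β) :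
    IsInRadical (α + β) := fun g => by
  have := hα g
  have := hβ (g ≫ inv (𝟙 Z - α ≫ g))
  have heq : 𝟙 Z - (α + β) ≫ g =
      (𝟙 Z - β ≫ g ≫ inv (𝟙 Z - α ≫ g)) ≫ (𝟙 Z - α ≫ g) := by
    simp only [Preadditive.sub_comp, Preadditive.add_comp, Category.id_comp,
      Category.assoc, IsIso.inv_hom_id, Category.comp_id]
    abel
  rw [heq]
  infer_instance

lemma sum {ι : Type*} (s : Finset ι) {α : ι → (Z ⟶ W)} (h : ∀ i ∈ s, IsInRadical (α i)) :
    IsInRadical (∑ i ∈ s, α i) :=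
  Finset.sum_induction α IsInRadical (fun _ _ => add) zero h

lemma isIso_id_sub {ψ : Z ⟶ Z} (h : IsInRadical ψ) : IsIso (𝟙 Z - ψ) := by
  simpa using h (𝟙 Z)

end IsInRadical

lemma isIso_of_comp_eq_id_of_isLocalRing {Z W : C} [Nontrivial (End Z)] [IsLocalRing (End W)]
    {α : Z ⟶ W} {r : W ⟶ Z} (hr : α ≫ r = 𝟙 Z) : IsIso α := by
  -- `r ≫ α` is an idempotent of the local ring `End W`, hence `0` or `1`; it is not `0`
  set e : End W := r ≫ α
  have hidem : e * e = e := by simp [e, End.mul_def, reassoc_of% hr]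
  rcases IsLocalRing.isUnit_or_isUnit_of_add_one (add_sub_cancel e 1) with hu | hu
  · have h1 : e = 1 := hu.mul_left_cancel (by rw [hidem, mul_one])
    exact ⟨r, hr, h1⟩
  · have h0 : e = 0 :=
      hu.mul_left_cancel (by rw [mul_zero, sub_mul, one_mul, hidem, sub_self])
    refine absurd ?_ (one_ne_zero (α := End Z))
    calc (1 : End Z) = α ≫ e ≫ r := by simp [e, hr]
      _ = 0 := by rw [h0]; simp

lemma isInRadical_of_not_isIso {Z W : C} [IsLocalRing (End Z)] [IsLocalRing (End W)]
    {α : Z ⟶ W} (h : ¬ IsIso α) : IsInRadical α := fun g => by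
  have hg : ¬ IsIso (α ≫ g) := fun _ =>
    h (isIso_of_comp_eq_id_of_isLocalRing (r := g ≫ inv (α ≫ g))
      ((Category.assoc _ _ _).symm.trans (IsIso.hom_inv_id _)))
  set a : End Z := α ≫ g
  exact (isUnit_iff_isIso (1 - a)).1 <|
    (IsLocalRing.isUnit_or_isUnit_of_add_one (add_sub_cancel a 1)).resolve_left
      fun hu => hg ((isUnit_iff_isIso a).1 hu)

section Biproduct

variable {J : Type} [Finite J] (Y : J → C) [HasBiproduct Y]

lemma isInRadical_of_isInRadical_components (ψ : ⨁ Y ⟶ ⨁ Y)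
    (h : ∀ i j, IsInRadical (biproduct.ι Y i ≫ ψ ≫ biproduct.π Y j)) : IsInRadical ψ := by
  have := Fintype.ofFinite J
  have hψ : ψ = ∑ i, ∑ j,
      biproduct.π Y i ≫ (biproduct.ι Y i ≫ ψ ≫ biproduct.π Y j) ≫ biproduct.ι Y j := by
    conv_lhs => rw [← Category.id_comp ψ, ← Category.comp_id ψ, ← biproduct.total]
    simp only [Preadditive.sum_comp, Preadditive.comp_sum, Category.assoc]
    exact Finset.sum_comm
  rw [hψ]
  exact IsInRadical.sum _ fun i _ => IsInRadical.sum _ fun j _ =>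
    by simpa using ((h i j).comp_left (biproduct.π Y i)).comp_right (biproduct.ι Y j)

lemma exists_isIso_component_id_sub_of_not_isIso [∀ j, IsLocalRing (End (Y j))]
    {φ : ⨁ Y ⟶ ⨁ Y} (hφ : ¬ IsIso φ) :
    ∃ i j, IsIso (biproduct.ι Y i ≫ (𝟙 _ - φ) ≫ biproduct.π Y j) := by
  by_contra! h
  have := (isInRadical_of_isInRadical_components Y _ fun i j =>
    isInRadical_of_not_isIso (h i j)).isIso_id_sub
  exact hφ (by simpa using this)

end Biproduct

namespace Limits

variable {J : Type*} (Y : J → C) [HasBiproduct Y] (j : J)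
  [HasBiproduct (Subtype.restrict (· ≠ j) Y)]

lemma biproduct.toSubtype_fromSubtype_add_π_ι :
    biproduct.toSubtype Y (· ≠ j) ≫ biproduct.fromSubtype Y (· ≠ j) +
      biproduct.π Y j ≫ biproduct.ι Y j = 𝟙 (⨁ Y) := by
  classical
  rw [biproduct.toSubtype_fromSubtype]
  ext k l
  by_cases hk : k = j
  · subst hk; simp
  · simp [hk, Ne.symm hk]

lemma biproduct.exists_comp_fromSubtype_comp_eq {X : C} (f : ⨁ Y ⟶ X) {ψ : ⨁ Y ⟶ ⨁ Y}
    (hψ : ψ ≫ f = 0) (i : J) (hθ : IsIso (biproduct.ι Y i ≫ ψ ≫ biproduct.π Y j)) :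
    ∃ q, q ≫ biproduct.fromSubtype Y (· ≠ j) ≫ f = f := by
  set θ := biproduct.ι Y i ≫ ψ ≫ biproduct.π Y j
  set p := biproduct.toSubtype Y (· ≠ j)
  set e := biproduct.fromSubtype Y (· ≠ j)
  have hdec := biproduct.toSubtype_fromSubtype_add_π_ι Y j
  -- row `i` of `ψ ≫ f = 0` expresses `ι j ≫ f` through the other summands
  have hfj : biproduct.ι Y j ≫ f = -(inv θ ≫ biproduct.ι Y i ≫ ψ ≫ p ≫ e ≫ f) := by
    have h0 : biproduct.ι Y i ≫ ψ ≫ (p ≫ e + biproduct.π Y j ≫ biproduct.ι Y j) ≫ f = 0 := by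
      rw [hdec, Category.id_comp, hψ, comp_zero]
    simp only [Preadditive.add_comp, Preadditive.comp_add, Category.assoc] at h0
    rw [← cancel_epi θ, Preadditive.comp_neg, IsIso.hom_inv_id_assoc, eq_neg_iff_add_eq_zero]
    simpa [θ, add_comm] using h0
  refine ⟨p - biproduct.π Y j ≫ inv θ ≫ biproduct.ι Y i ≫ ψ ≫ p, ?_⟩
  conv_rhs => rw [← Category.id_comp f, ← hdec]
  simp only [p, e, Preadditive.add_comp, Category.assoc, hfj,
    Preadditive.comp_neg, Preadditive.neg_comp, sub_eq_add_neg]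

end Limits

end CategoryTheory

namespace PaperIKM

section Approximation

variable {C : Type*} [Category C] {U : Set C}

def IsRightMinimal {A X : C} (f : A ⟶ X) : Prop :=
  ∀ φ : A ⟶ A, φ ≫ f = f → IsIso φ

variable (hsummand : ∀ (X Y : C) (s : X ⟶ Y) (r : Y ⟶ X), s ≫ r = 𝟙 X → Y ∈ U → X ∈ U)
include hsummand

lemma IsRightApproximation.comp_of_retract {A' A X : C} {f : A ⟶ X}
    (hf : IsRightApproximation U f) {s : A' ⟶ A} {r : A ⟶ A'} (hsr : s ≫ r = 𝟙 A')
    {q : A ⟶ A'} (hq : q ≫ s ≫ f = f) : IsRightApproximation U (s ≫ f) :=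
  ⟨hsummand _ _ s r hsr hf.1, fun B hB g =>
    let ⟨h, hh⟩ := hf.2 B hB g
    ⟨h ≫ q, by rw [Category.assoc, hq, hh]⟩⟩

variable [Preadditive C] [HasFiniteBiproducts C]

lemma exists_isRightMinimal_of_biproduct {X : C} {J : Type} [Finite J] (Y : J → C)
    [∀ j, IsLocalRing (End (Y j))] (f : ⨁ Y ⟶ X) (hf : IsRightApproximation U f) :
    ∃ (A : C) (f' : A ⟶ X), IsRightApproximation U f' ∧ IsRightMinimal f' := by
  induction hn : Nat.card J using Nat.strong_induction_on generalizing J with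
  | _ n ih =>
  by_cases hmin : IsRightMinimal f
  · exact ⟨_, f, hf, hmin⟩
  obtain ⟨φ, hφf, hφ⟩ : ∃ φ, φ ≫ f = f ∧ ¬ IsIso φ := by simpa [IsRightMinimal] using hmin
  obtain ⟨i, j, hij⟩ := exists_isIso_component_id_sub_of_not_isIso Y hφ
  obtain ⟨q, hq⟩ := biproduct.exists_comp_fromSubtype_comp_eq Y j f
    (ψ := 𝟙 _ - φ) (by simp [hφf]) i hij
  have (k : {k // k ≠ j}) : IsLocalRing (End (Subtype.restrict _ Y k)) :=
    inferInstanceAs (IsLocalRing (End (Y k)))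
  exact ih _ (hn ▸ Finite.card_subtype_lt (p := (· ≠ j)) (x := j) (by simp))
    (Subtype.restrict _ Y) _
    (hf.comp_of_retract hsummand (biproduct.fromSubtype_toSubtype Y _) hq) rfl

lemma exists_isRightMinimal_approximation (hKS : IsKrullSchmidt C)
    (hcf : ContravariantlyFinite U) (X : C) :
    ∃ (A : C) (f : A ⟶ X), IsRightApproximation U f ∧ IsRightMinimal f := by
  obtain ⟨A, f, hf⟩ := hcf X
  obtain ⟨m, Y, hY, ⟨e⟩⟩ := hKS A
  exact exists_isRightMinimal_of_biproduct hsummand Y (e.inv ≫ f)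
    (hf.comp_of_retract hsummand e.inv_hom_id (q := e.hom) (by simp))

end Approximation

lemma shift_mem_rightPerp {C : Type*} [Category C] [Preadditive C] [HasShift C ℤ]
    [∀ n : ℤ, (shiftFunctor C n).Additive] {U : Set C}
    (hU : ∀ (n : ℤ) (X : C), X ∈ U → X⟦n⟧ ∈ U) (n : ℤ) {T : C} (hT : T ∈ rightPerp U) :
    T⟦n⟧ ∈ rightPerp U := by
  intro X hX f
  let e := (shiftFunctorCompIsoId C (-n) n (neg_add_cancel n)).app X
  have h0 : (shiftFunctor C n).preimage (e.hom ≫ f) = 0 := hT _ (hU (-n) X hX) _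
  have : e.hom ≫ f = 0 := by simpa using congrArg (shiftFunctor C n).map h0
  simpa using (cancel_epi e.hom).1 (this.trans comp_zero.symm)

variable {C : Type u} [Category.{v} C] [HasZeroObject C] [HasShift C ℤ] [Preadditive C]
  [∀ n : ℤ, (shiftFunctor C n).Additive] [Pretriangulated C]

lemma mem_rightPerp_of_isRightMinimal {U : Set C}
    (hext : ∀ T : Triangle C, T ∈ distTriang C → T.obj₁ ∈ U → T.obj₃ ∈ U → T.obj₂ ∈ U)
    {A X B : C} {f : A ⟶ X} {g : X ⟶ B} {h : B ⟶ A⟦(1 : ℤ)⟧}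
    (hT : Triangle.mk f g h ∈ distTriang C) (hf : IsRightApproximation U f)
    (hmin : IsRightMinimal f) : B ∈ rightPerp U := by
  intro W hW w
  suffices hwh : w ≫ h = 0 by
    obtain ⟨e, rfl⟩ := Triangle.coyoneda_exact₃ _ hT w hwh
    obtain ⟨d, rfl⟩ := hf.2 W hW e
    exact (Category.assoc _ _ _).trans ((d ≫= comp_distTriang_mor_zero₁₂ _ hT).trans comp_zero)
  obtain ⟨E, i, p, hT'⟩ := distinguished_cocone_triangle₂ (w ≫ h)
  obtain ⟨t, hit, -⟩ : ∃ t : E ⟶ X, i ≫ t = 𝟙 A ≫ f ∧ p ≫ w = t ≫ g :=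
    complete_distinguished_triangle_morphism₂ _ _ hT' hT (𝟙 A) w
      (show (w ≫ h) ≫ (𝟙 A)⟦(1 : ℤ)⟧' = w ≫ h by simp)
  obtain ⟨s, hs⟩ := hf.2 E (hext _ hT' hf.1 hW) t
  have : IsIso (i ≫ s) := hmin _ (by rw [Category.assoc, hs, hit, Category.id_comp])
  have : Mono i := mono_of_mono i s
  exact Triangle.mor₃_eq_zero_of_mono₁ _ hT' this

/-- in a Krull–Schmidt triangulated category, a contravariantly finite thick
subcategory `U` gives rise to a stable t-structure `(U, U^⊥)`. -/
theorem stmt4 [HasFiniteBiproducts C] (hKS : IsKrullSchmidt C)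
    (U : Set C) (hU : IsThickSub C U) (hcf : ContravariantlyFinite U) :
    IsStableTStructure C U (rightPerp U) := by
  refine ⟨hU.shift_mem, fun n _ => shift_mem_rightPerp hU.shift_mem n,
    fun X _ hX hY f => hY X hX f, fun X => ?_⟩
  obtain ⟨A, f, hf, hmin⟩ := exists_isRightMinimal_approximation hU.summand_mem hKS hcf X
  obtain ⟨B, g, h, hT⟩ := distinguished_cocone_triangle f
  exact ⟨A, B, hf.1, mem_rightPerp_of_isRightMinimal hU.ext_mem hT hf hmin, f, g, h, hT⟩

end PaperIKM
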